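/- Let Γ be a cyclic group of order k ≥ 4, let 2 ≤ j ≤ k−2, and let (G,ψ) be a ℤ_k^j-gain tight Γ-gain graph with a free vertex v of degree 3 which has no loop. Let (G₁,ψ₁) and (G₂,ψ₂) be obtained from (G,ψ) by applying two different 1-reductions at v, adding the edges f₁ and f₂ respectively, and suppose that for i = 1,2 the graph (G_i,ψ_i) has a blocker H_i. If E(H₁ ∩ H₂) ≠ ∅, then neither H₁ nor H₂ is a general-count blocker. -/

import Mathlib

open scoped Classical

namespace GR

/-- A finite directed multigraph with edge labels ("gains") in a group `Γ` and a
designated finite set of fixed vertices. -/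
structure GainedGraph (V E Γ : Type) where
  tail : E → V
  head : E → V
  gain : E → Γ
  fixed : Finset V

variable {V E Γ : Type} [DecidableEq V] [DecidableEq E] [Fintype V] [Fintype E] [Group Γ]

/-- A subgraph: a set of vertices and a set of edges whose endpoints lie in the vertex set. -/
structure Subgraph (G : GainedGraph V E Γ) where
  verts : Finset V
  edges : Finset E
  tail_mem : ∀ e ∈ edges, G.tail e ∈ verts
  head_mem : ∀ e ∈ edges, G.head e ∈ verts

namespace Subgraph

variable {G : GainedGraph V E Γ}

instance : Top (Subgraph G) :=
  ⟨⟨Finset.univ, Finset.univ, fun _ _ => Finset.mem_univ _, fun _ _ => Finset.mem_univ _⟩⟩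

instance : LE (Subgraph G) :=
  ⟨fun H K => H.verts ⊆ K.verts ∧ H.edges ⊆ K.edges⟩

def union (H K : Subgraph G) : Subgraph G where
  verts := H.verts ∪ K.verts
  edges := H.edges ∪ K.edges
  tail_mem e he := by
    rcases Finset.mem_union.1 he with h | h
    · exact Finset.mem_union_left _ (H.tail_mem e h)
    · exact Finset.mem_union_right _ (K.tail_mem e h)
  head_mem e he := by
    rcases Finset.mem_union.1 he with h | h
    · exact Finset.mem_union_left _ (H.head_mem e h)
    · exact Finset.mem_union_right _ (K.head_mem e h)

def inter (H K : Subgraph G) : Subgraph G where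
  verts := H.verts ∩ K.verts
  edges := H.edges ∩ K.edges
  tail_mem e he := by
    rcases Finset.mem_inter.1 he with ⟨h1, h2⟩
    exact Finset.mem_inter.2 ⟨H.tail_mem e h1, K.tail_mem e h2⟩
  head_mem e he := by
    rcases Finset.mem_inter.1 he with ⟨h1, h2⟩
    exact Finset.mem_inter.2 ⟨H.head_mem e h1, K.head_mem e h2⟩

/-- Delete a vertex together with all edges incident to it. -/
def deleteVertex (H : Subgraph G) (v : V) : Subgraph G where
  verts := H.verts.erase v
  edges := H.edges.filter fun e => G.tail e ≠ v ∧ G.head e ≠ v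
  tail_mem e he := by
    rcases Finset.mem_filter.1 he with ⟨h1, h2, h3⟩
    exact Finset.mem_erase.2 ⟨h2, H.tail_mem e h1⟩
  head_mem e he := by
    rcases Finset.mem_filter.1 he with ⟨h1, h2, h3⟩
    exact Finset.mem_erase.2 ⟨h3, H.head_mem e h1⟩

/-- Delete an edge. -/
def deleteEdge (H : Subgraph G) (f : E) : Subgraph G where
  verts := H.verts
  edges := H.edges.erase f
  tail_mem e he := H.tail_mem e (Finset.mem_of_mem_erase he)
  head_mem e he := H.head_mem e (Finset.mem_of_mem_erase he)

/-- Add an edge (together with its endpoints). -/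
def addEdge (H : Subgraph G) (f : E) : Subgraph G where
  verts := insert (G.tail f) (insert (G.head f) H.verts)
  edges := insert f H.edges
  tail_mem e he := by
    rcases Finset.mem_insert.1 he with rfl | h
    · exact Finset.mem_insert_self _ _
    · exact Finset.mem_insert_of_mem (Finset.mem_insert_of_mem (H.tail_mem e h))
  head_mem e he := by
    rcases Finset.mem_insert.1 he with rfl | h
    · exact Finset.mem_insert_of_mem (Finset.mem_insert_self _ _)
    · exact Finset.mem_insert_of_mem (Finset.mem_insert_of_mem (H.head_mem e h))

/-- The free vertices of a subgraph. -/
def freeVerts (H : Subgraph G) : Finset V := H.verts \ G.fixed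

/-- The fixed vertices of a subgraph. -/
def fixedVerts (H : Subgraph G) : Finset V := H.verts ∩ G.fixed

end Subgraph

/-- The starting vertex of an oriented traversal of an edge. -/
def stepStart (G : GainedGraph V E Γ) (s : E × Bool) : V :=
  if s.2 then G.tail s.1 else G.head s.1

/-- The ending vertex of an oriented traversal of an edge. -/
def stepEnd (G : GainedGraph V E Γ) (s : E × Bool) : V :=
  if s.2 then G.head s.1 else G.tail s.1

/-- The gain contributed by an oriented traversal of an edge. -/
def stepGain (G : GainedGraph V E Γ) (s : E × Bool) : Γ :=
  if s.2 then G.gain s.1 else (G.gain s.1)⁻¹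

/-- `IsWalk G H L u w` : `L` is a walk in the subgraph `H` from `u` to `w`. -/
def IsWalk (G : GainedGraph V E Γ) (H : Subgraph G) : List (E × Bool) → V → V → Prop
  | [], u, w => u = w ∧ u ∈ H.verts
  | s :: L, u, w => s.1 ∈ H.edges ∧ stepStart G s = u ∧ IsWalk G H L (stepEnd G s) w

/-- The gain of a walk. -/
def walkGain (G : GainedGraph V E Γ) (L : List (E × Bool)) : Γ :=
  (L.map (stepGain G)).prod

/-- The vertices visited by a walk starting at `u`. -/
def walkVerts (G : GainedGraph V E Γ) (u : V) (L : List (E × Bool)) : List V :=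
  u :: L.map (stepEnd G)

/-- `⟨H⟩` : the subgroup of `Γ` generated by the gains of all closed walks in `H`
containing no fixed vertex. -/
def gainGroup (G : GainedGraph V E Γ) (H : Subgraph G) : Subgroup Γ :=
  Subgroup.closure
    {g | ∃ u L, IsWalk G H L u u ∧ (∀ x ∈ walkVerts G u L, x ∉ G.fixed) ∧ walkGain G L = g}

/-- A subgraph is balanced if its gain group is trivial. -/
def Balanced (G : GainedGraph V E Γ) (H : Subgraph G) : Prop := gainGroup G H = ⊥

def Reachable (G : GainedGraph V E Γ) (H : Subgraph G) (u w : V) : Prop :=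
  ∃ L, IsWalk G H L u w

def Connected (G : GainedGraph V E Γ) (H : Subgraph G) : Prop :=
  H.verts.Nonempty ∧ ∀ u ∈ H.verts, ∀ w ∈ H.verts, Reachable G H u w

/-- `v` is a cut-vertex of the subgraph `H`. -/
def IsCutVertex (G : GainedGraph V E Γ) (H : Subgraph G) (v : V) : Prop :=
  v ∈ H.verts ∧ ∃ u ∈ H.verts, ∃ w ∈ H.verts, u ≠ v ∧ w ≠ v ∧
    Reachable G H u w ∧ ¬ Reachable G (H.deleteVertex v) u w

/-- `(2,m,l)`-sparsity of the subgraph `K`. -/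
def Sparse (G : GainedGraph V E Γ) (m l : ℤ) (K : Subgraph G) : Prop :=
  ∀ H : Subgraph G, H ≤ K → H.edges.Nonempty →
    (H.edges.card : ℤ) ≤ 2 * (H.freeVerts.card : ℤ) + m * (H.fixedVerts.card : ℤ) - l

/-- `(2,m,l)`-tightness of the subgraph `K`. -/
def Tight (G : GainedGraph V E Γ) (m l : ℤ) (K : Subgraph G) : Prop :=
  Sparse G m l K ∧
    (K.edges.card : ℤ) = 2 * (K.freeVerts.card : ℤ) + m * (K.fixedVerts.card : ℤ) - l

/-- `(2,m,3,l)`-gain-tightness: `(2,m,l)`-tight and every balanced subgraph with a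
nonempty edge set is `(2,3)`-sparse. -/
def GainTight23 (G : GainedGraph V E Γ) (m l : ℤ) (K : Subgraph G) : Prop :=
  Tight G m l K ∧ ∀ H : Subgraph G, H ≤ K → H.edges.Nonempty → Balanced G H →
    (H.edges.card : ℤ) ≤ 2 * (H.verts.card : ℤ) - 3

/-- The subgraph has no fixed vertex. -/
def NoFixed (G : GainedGraph V E Γ) (H : Subgraph G) : Prop :=
  ∀ x ∈ H.verts, x ∉ G.fixed

/-- Near-balanced with base vertex `v` and gain `δ`: unbalanced, and every closed
walk starting at `v` not containing `v` as an internal vertex has gain `1`, `δ` or `δ⁻¹`. -/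
def NearBalancedAt (G : GainedGraph V E Γ) (H : Subgraph G) (v : V) (δ : Γ) : Prop :=
  ¬ Balanced G H ∧ ∀ L, IsWalk G H L v v →
    (∀ x ∈ (L.map (stepEnd G)).dropLast, x ≠ v) → walkGain G L ∈ ({1, δ, δ⁻¹} : Set Γ)

def NearBalanced (G : GainedGraph V E Γ) (H : Subgraph G) : Prop :=
  NoFixed G H ∧ ∃ v ∈ H.verts, ∃ δ : Γ, NearBalancedAt G H v δ

/-- The gain group of `H` is isomorphic to `ℤ_n`. -/
def IsZIso (G : GainedGraph V E Γ) (H : Subgraph G) (n : ℕ) : Prop :=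
  Nonempty (gainGroup G H ≃* Multiplicative (ZMod n))

def ProperNearBalanced (G : GainedGraph V E Γ) (H : Subgraph G) : Prop :=
  NearBalanced G H ∧ ¬ IsZIso G H 2 ∧ ¬ IsZIso G H 3

/-- The set `S_i(k,j)`. -/
def SSet (k j : ℕ) (i : ℤ) : Set ℕ :=
  {n | 2 ≤ n ∧ n ∣ k ∧ (Odd j → n ≠ 2) ∧ ((j : ZMod n) = (i : ZMod n))}

/-- `H` is `S_i(k,j)`. -/
def IsS (G : GainedGraph V E Γ) (k j : ℕ) (i : ℤ) (H : Subgraph G) : Prop :=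
  ∃ n ∈ SSet k j i, IsZIso G H n

/-- `H` is `S_{±1}(k,j)`. -/
def IsSpm (G : GainedGraph V E Γ) (k j : ℕ) (H : Subgraph G) : Prop :=
  IsS G k j (-1) H ∨ IsS G k j 1 H

/-- The function `α_k^j` on (connected) subgraphs. -/
noncomputable def alpha (G : GainedGraph V E Γ) (k j : ℕ) (X : Subgraph G) : ℤ :=
  if Balanced G X then 0
  else if Odd j ∧ IsZIso G X 2 then 1
  else if IsSpm G k j X then 2 - (X.fixedVerts.card : ℤ)
  else if IsS G k j 0 X ∨ (X.fixedVerts.card = 0 ∧ ProperNearBalanced G X) then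
    2 - 2 * (X.fixedVerts.card : ℤ)
  else 3 - 2 * (X.fixedVerts.card : ℤ)

/-- The subgraph spanned by a set of edges. -/
def edgeSpan (G : GainedGraph V E Γ) (F : Finset E) : Subgraph G where
  verts := F.image G.tail ∪ F.image G.head
  edges := F
  tail_mem e he := Finset.mem_union_left _ (Finset.mem_image_of_mem _ he)
  head_mem e he := Finset.mem_union_right _ (Finset.mem_image_of_mem _ he)

/-- The connected component of the edge `e` in the subgraph spanned by `F`. -/
noncomputable def componentOf (G : GainedGraph V E Γ) (F : Finset E) (e : E) : Subgraph G :=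
  edgeSpan G (F.filter fun f => Reachable G (edgeSpan G F) (G.tail e) (G.tail f))

/-- The connected components of the edge set `F`. -/
noncomputable def components (G : GainedGraph V E Γ) (F : Finset E) : Finset (Subgraph G) :=
  F.image (componentOf G F)

/-- The count `f_k^j(F) = Σ_{X ∈ C(F)} (2|V(X)| − 3 + α_k^j(X))`. -/
noncomputable def fCount (G : GainedGraph V E Γ) (k j : ℕ) (F : Finset E) : ℤ :=
  ∑ X ∈ components G F, (2 * (X.verts.card : ℤ) - 3 + alpha G k j X)

/-- `ℤ_k^j`-gain sparsity. -/
def GainSparseKJ (G : GainedGraph V E Γ) (k j : ℕ) (K : Subgraph G) : Prop :=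
  ∀ H : Subgraph G, H ≤ K → H.edges.Nonempty → (H.edges.card : ℤ) ≤ fCount G k j H.edges

/-- `ℤ_k^j`-gain tightness. -/
def GainTightKJ (G : GainedGraph V E Γ) (k j : ℕ) (K : Subgraph G) : Prop :=
  GainSparseKJ G k j K ∧ (K.edges.card : ℤ) = fCount G k j K.edges

/-- The degree of a vertex in a subgraph (a loop counts twice). -/
def degree (G : GainedGraph V E Γ) (K : Subgraph G) (v : V) : ℕ :=
  (K.edges.filter fun e => G.tail e = v).card + (K.edges.filter fun e => G.head e = v).card

def HasLoopAt (G : GainedGraph V E Γ) (K : Subgraph G) (v : V) : Prop :=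
  ∃ e ∈ K.edges, G.tail e = v ∧ G.head e = v

/-- The neighbours of a vertex in a subgraph. -/
def neighbors (G : GainedGraph V E Γ) (K : Subgraph G) (v : V) : Finset V :=
  ((K.edges.filter fun e => G.tail e = v).image G.head) ∪
    ((K.edges.filter fun e => G.head e = v).image G.tail)

/-- The subgraph `K` satisfies the axioms of a `Γ`-gain graph. -/
structure IsGainGraphOn (G : GainedGraph V E Γ) (K : Subgraph G) : Prop where
  fixed_card : K.fixedVerts.card ≤ 1
  same_dir : ∀ e ∈ K.edges, ∀ f ∈ K.edges, e ≠ f → G.tail e = G.tail f →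
    G.head e = G.head f → G.gain e ≠ G.gain f
  opp_dir : ∀ e ∈ K.edges, ∀ f ∈ K.edges, e ≠ f → G.tail e = G.head f →
    G.head e = G.tail f → G.gain e ≠ (G.gain f)⁻¹
  fixed_not_loop : ∀ e ∈ K.edges, G.tail e = G.head e → G.tail e ∉ G.fixed
  fixed_not_parallel : ∀ e ∈ K.edges, ∀ f ∈ K.edges, e ≠ f →
    (G.tail e ∈ G.fixed ∨ G.head e ∈ G.fixed) →
    ({G.tail e, G.head e} : Finset V) ≠ {G.tail f, G.head f}
  loop_gain : ∀ e ∈ K.edges, G.tail e = G.head e → G.gain e ≠ 1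

/-- `H` together with the vertex `v` and all edges of `G₀` incident to `v`. -/
def addVertexEdges (G : GainedGraph V E Γ) (G₀ H : Subgraph G) (v : V) : Subgraph G where
  verts := (H.verts ∪ {v}) ∪
    ((G₀.edges.filter fun e => G.tail e = v ∨ G.head e = v).image G.tail ∪
      (G₀.edges.filter fun e => G.tail e = v ∨ G.head e = v).image G.head)
  edges := H.edges ∪ G₀.edges.filter fun e => G.tail e = v ∨ G.head e = v
  tail_mem e he := by
    rcases Finset.mem_union.1 he with h | h
    · exact Finset.mem_union_left _ (Finset.mem_union_left _ (H.tail_mem e h))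
    · exact Finset.mem_union_right _ (Finset.mem_union_left _ (Finset.mem_image_of_mem _ h))
  head_mem e he := by
    rcases Finset.mem_union.1 he with h | h
    · exact Finset.mem_union_left _ (Finset.mem_union_left _ (H.head_mem e h))
    · exact Finset.mem_union_right _ (Finset.mem_union_right _ (Finset.mem_image_of_mem _ h))

/-- The result of a 1-reduction at `v` adding the edge `f`: delete `v` and all edges at
`v` and add the edge `f`. -/
def reduceAt (G : GainedGraph V E Γ) (G₀ : Subgraph G) (v : V) (f : E) : Subgraph G where
  verts := insert (G.tail f) (insert (G.head f) (G₀.verts.erase v))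
  edges := insert f (G₀.edges.filter fun e => G.tail e ≠ v ∧ G.head e ≠ v)
  tail_mem e he := by
    rcases Finset.mem_insert.1 he with rfl | h
    · exact Finset.mem_insert_self _ _
    · rcases Finset.mem_filter.1 h with ⟨h1, h2, h3⟩
      exact Finset.mem_insert_of_mem
        (Finset.mem_insert_of_mem (Finset.mem_erase.2 ⟨h2, G₀.tail_mem e h1⟩))
  head_mem e he := by
    rcases Finset.mem_insert.1 he with rfl | h
    · exact Finset.mem_insert_of_mem (Finset.mem_insert_self _ _)
    · rcases Finset.mem_filter.1 h with ⟨h1, h2, h3⟩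
      exact Finset.mem_insert_of_mem
        (Finset.mem_insert_of_mem (Finset.mem_erase.2 ⟨h3, G₀.head_mem e h1⟩))

/-- The new edge `f` arises from a 1-reduction at the vertex `v` of `G₀`: its endpoints are
joined to `v` by two distinct edges of `G₀` and its gain is the gain of the corresponding
path of length two through `v`. -/
def IsOneReduction (G : GainedGraph V E Γ) (G₀ : Subgraph G) (v : V) (f : E) : Prop :=
  f ∉ G₀.edges ∧ G.tail f ≠ v ∧ G.head f ≠ v ∧
    ∃ s₁ s₂ : E × Bool, s₁.1 ∈ G₀.edges ∧ s₂.1 ∈ G₀.edges ∧ s₁.1 ≠ s₂.1 ∧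
      stepEnd G s₁ = v ∧ stepStart G s₂ = v ∧
      G.tail f = stepStart G s₁ ∧ G.head f = stepEnd G s₂ ∧
      G.gain f = stepGain G s₁ * stepGain G s₂

/-- Two labelled edges coincide (up to reorientation with gain inversion). -/
def SameEdge (G : GainedGraph V E Γ) (e f : E) : Prop :=
  (G.tail e = G.tail f ∧ G.head e = G.head f ∧ G.gain e = G.gain f) ∨
    (G.tail e = G.head f ∧ G.head e = G.tail f ∧ G.gain e = (G.gain f)⁻¹)

/-- `H` is a blocker of the 1-reduction at `v` adding the edge `f`. -/
def IsBlocker (G : GainedGraph V E Γ) (k j : ℕ) (G₀ : Subgraph G) (v : V) (f : E)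
    (H : Subgraph G) : Prop :=
  H ≤ G₀ ∧ v ∉ H.verts ∧ G.tail f ∈ H.verts ∧ G.head f ∈ H.verts ∧ H.edges.Nonempty ∧
    Connected G (H.addEdge f) ∧
    (H.edges.card : ℤ) = 2 * (H.verts.card : ℤ) - 3 + alpha G k j (H.addEdge f)

/-- The graph `G` extended by one fresh edge `none` with tail `t`, head `h` and gain `g`. -/
def extendGraph (G : GainedGraph V E Γ) (t h : V) (g : Γ) : GainedGraph V (Option E) Γ where
  tail e := e.elim t G.tail
  head e := e.elim h G.head
  gain e := e.elim g G.gain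
  fixed := G.fixed

/-- The whole original graph `G`, viewed inside the extension. -/
def extendTop (G : GainedGraph V E Γ) (t h : V) (g : Γ) : Subgraph (extendGraph G t h g) where
  verts := Finset.univ
  edges := Finset.univ.image Option.some
  tail_mem _ _ := Finset.mem_univ _
  head_mem _ _ := Finset.mem_univ _

/-- There is an admissible 1-reduction at `v`, i.e. a choice of new edge (with
endpoints and gain coming from a path of length two through `v`) such that the
resulting `Γ`-gain graph is well defined and `ℤ_k^j`-gain tight. -/
def AdmissibleOneReductionExists (G : GainedGraph V E Γ) (k j : ℕ) (v : V) : Prop :=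
  ∃ t h : V, ∃ g : Γ,
    IsOneReduction (extendGraph G t h g) (extendTop G t h g) v none ∧
    IsGainGraphOn (extendGraph G t h g)
      (reduceAt (extendGraph G t h g) (extendTop G t h g) v none) ∧
    GainTightKJ (extendGraph G t h g) k j
      (reduceAt (extendGraph G t h g) (extendTop G t h g) v none)

end GR

/-!
Let `E(v)` be the three edges at `v`. Two different 1-reductions at `v` use all of them, so
`F = E(H₁ ∪ H₂) ∪ E(v)` spans at most the vertices of `H₁ ∪ H₂` and `v`, and
`|F| + |E(H₁ ∩ H₂)| = |E(H₁)| + |E(H₂)| + 3`. Sparsity bounds `|F|` by twice the number of free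
vertices it spans. Since `α + 2|V₀|` can only grow from a connected subgraph to a connected
supergraph, sparsity also bounds `|E(H₁ ∩ H₂)|` by twice the free vertices of `H₁ ∩ H₂` minus the
defect `3 - α(H₂ + f₂) - 2|V₀(H₂)|`, which is exactly what the blocker count of `H₂` subtracts.
A general-count blocker `H₁` has `|E(H₁)|` equal to twice its free vertices, and summing up the
free vertices of `H₁ ∪ H₂` and `H₁ ∩ H₂` gives `3 ≤ 2`.
-/

theorem Finset.subset_union_of_card_add_one_eq {α : Type*} [DecidableEq α] {A P Q : Finset α}
    (hP : P ⊆ A) (hQ : Q ⊆ A) (hPA : P.card + 1 = A.card) (hQP : Q.card = P.card)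
    (hne : P ≠ Q) : A ⊆ P ∪ Q := by
  intro a ha
  by_contra h
  rw [Finset.mem_union, not_or] at h
  have hcard : (A.erase a).card ≤ P.card := by rw [Finset.card_erase_of_mem ha]; omega
  have hP' := Finset.eq_of_subset_of_card_le
    (fun x hx => Finset.mem_erase.2 ⟨fun hxa => h.1 (by rwa [← hxa]), hP hx⟩) hcard
  have hQ' := Finset.eq_of_subset_of_card_le
    (fun x hx => Finset.mem_erase.2 ⟨fun hxa => h.2 (by rwa [← hxa]), hQ hx⟩) (hQP ▸ hcard)
  exact hne (hP'.trans hQ'.symm)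

namespace GR

namespace Subgraph

variable {V E Γ : Type} [DecidableEq V] {G : GainedGraph V E Γ} {H K : Subgraph G}

lemma addEdge_verts_of_mem [DecidableEq E] {f : E} (ht : G.tail f ∈ H.verts)
    (hh : G.head f ∈ H.verts) : (H.addEdge f).verts = H.verts := by
  simp only [addEdge, Finset.insert_eq_of_mem hh, Finset.insert_eq_of_mem ht]

lemma card_fixedVerts_le_of_le (h : H ≤ K) : H.fixedVerts.card ≤ K.fixedVerts.card :=
  Finset.card_le_card (Finset.inter_subset_inter_right h.1)

lemma card_freeVerts_add_card_fixedVerts (H : Subgraph G) :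
    H.freeVerts.card + H.fixedVerts.card = H.verts.card :=
  Finset.card_sdiff_add_card_inter _ _

lemma card_freeVerts_le_of_le (h : H ≤ K) : H.freeVerts.card ≤ K.freeVerts.card :=
  Finset.card_le_card (Finset.sdiff_subset_sdiff h.1 subset_rfl)

lemma card_freeVerts_le_of_subset_insert {v : V} (h : H.verts ⊆ insert v K.verts) :
    H.freeVerts.card ≤ K.freeVerts.card + 1 :=
  by
  refine (Finset.card_le_card fun x hx => ?_).trans (Finset.card_insert_le v K.freeVerts)
  obtain ⟨hxH, hxfree⟩ := Finset.mem_sdiff.1 hx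
  rcases Finset.mem_insert.1 (h hxH) with rfl | hxK
  exacts [Finset.mem_insert_self _ _, Finset.mem_insert_of_mem (Finset.mem_sdiff.2 ⟨hxK, hxfree⟩)]

lemma card_freeVerts_union_add_inter (H K : Subgraph G) :
    (H.union K).freeVerts.card + (H.inter K).freeVerts.card =
      H.freeVerts.card + K.freeVerts.card := by
  rw [← Finset.card_union_add_card_inter H.freeVerts]
  congr 2 <;> ext <;> simp only [freeVerts, union, inter, Finset.mem_sdiff, Finset.mem_union,
    Finset.mem_inter] <;> tauto

end Subgraph

section Walks

variable {V E Γ : Type} {G : GainedGraph V E Γ} {H K : Subgraph G}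

lemma stepStart_mem {s : E × Bool} (hs : s.1 ∈ H.edges) : stepStart G s ∈ H.verts := by
  rcases s with ⟨e, _ | _⟩
  · exact H.head_mem e hs
  · exact H.tail_mem e hs

lemma stepEnd_mem {s : E × Bool} (hs : s.1 ∈ H.edges) : stepEnd G s ∈ H.verts := by
  rcases s with ⟨e, _ | _⟩
  · exact H.tail_mem e hs
  · exact H.head_mem e hs

lemma IsWalk.start_mem : ∀ {L : List (E × Bool)} {u w : V}, IsWalk G H L u w → u ∈ H.verts
  | [], _, _, h => h.1 ▸ h.2
  | _ :: _, _, _, h => h.2.1 ▸ stepStart_mem h.1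

lemma IsWalk.mem_of_mem_map_stepEnd : ∀ {L : List (E × Bool)} {u w : V},
    IsWalk G H L u w → ∀ x ∈ L.map (stepEnd G), x ∈ H.verts
  | [], _, _, _ => by simp
  | s :: _, _, _, h => by
    rintro x (_ | ⟨_, hx⟩)
    · exact stepEnd_mem h.1
    · exact h.2.2.mem_of_mem_map_stepEnd x hx

lemma IsWalk.mono (hHK : H ≤ K) : ∀ {L : List (E × Bool)} {u w : V},
    IsWalk G H L u w → IsWalk G K L u w
  | [], _, _, h => ⟨h.1, hHK.1 h.2⟩
  | _ :: _, _, _, h => ⟨hHK.2 h.1, h.2.1, h.2.2.mono hHK⟩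

lemma IsWalk.append : ∀ {L₁ L₂ : List (E × Bool)} {u x w : V},
    IsWalk G H L₁ u x → IsWalk G H L₂ x w → IsWalk G H (L₁ ++ L₂) u w
  | [], _, _, _, _, h₁, h₂ => h₁.1 ▸ h₂
  | _ :: _, _, _, _, _, h₁, h₂ => ⟨h₁.1, h₁.2.1, h₁.2.2.append h₂⟩

lemma IsWalk.of_append_cons : ∀ {L₁ L₂ : List (E × Bool)} {s : E × Bool} {u w : V},
    IsWalk G H (L₁ ++ s :: L₂) u w → IsWalk G H L₂ (stepEnd G s) w
  | [], _, _, _, _, h => h.2.2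
  | _ :: _, _, _, _, _, h => IsWalk.of_append_cons h.2.2

def flipStep (s : E × Bool) : E × Bool := (s.1, !s.2)

@[simp] lemma stepStart_flipStep (s : E × Bool) : stepStart G (flipStep s) = stepEnd G s := by
  rcases s with ⟨_, _ | _⟩ <;> rfl

@[simp] lemma stepEnd_flipStep (s : E × Bool) : stepEnd G (flipStep s) = stepStart G s := by
  rcases s with ⟨_, _ | _⟩ <;> rfl

@[simp] lemma stepGain_flipStep [Group Γ] (s : E × Bool) :
    stepGain G (flipStep s) = (stepGain G s)⁻¹ := by
  rcases s with ⟨_, _ | _⟩ <;> simp [stepGain, flipStep]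

def revWalk (L : List (E × Bool)) : List (E × Bool) := (L.map flipStep).reverse

lemma IsWalk.revWalk : ∀ {L : List (E × Bool)} {u w : V},
    IsWalk G H L u w → IsWalk G H (revWalk L) w u
  | [], _, _, h => ⟨h.1.symm, h.1 ▸ h.2⟩
  | s :: L, u, _, h => by
    have hs : IsWalk G H [flipStep s] (stepEnd G s) u :=
      ⟨h.1, stepStart_flipStep s, (stepEnd_flipStep s).trans h.2.1,
        (stepEnd_flipStep s).symm ▸ stepStart_mem h.1⟩
    simpa [GR.revWalk] using h.2.2.revWalk.append hs

lemma walkGain_append [Group Γ] (L₁ L₂ : List (E × Bool)) :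
    walkGain G (L₁ ++ L₂) = walkGain G L₁ * walkGain G L₂ := by
  simp [walkGain]

lemma walkGain_revWalk [Group Γ] : ∀ L : List (E × Bool), walkGain G (revWalk L) = (walkGain G L)⁻¹
  | [] => by simp [walkGain, revWalk]
  | s :: L => by
    rw [show revWalk (s :: L) = revWalk L ++ [flipStep s] by simp [revWalk],
      walkGain_append, walkGain_revWalk L]
    simp [walkGain]

lemma map_stepEnd_revWalk (L : List (E × Bool)) :
    (revWalk L).map (stepEnd G) = (L.map (stepStart G)).reverse := by
  simp [revWalk, Function.comp_def]

lemma IsWalk.tail_map_stepStart : ∀ {L : List (E × Bool)} {u w : V},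
    IsWalk G H L u w → (L.map (stepStart G)).tail = (L.map (stepEnd G)).dropLast
  | [], _, _, _ => rfl
  | [_], _, _, _ => rfl
  | s :: s' :: L, _, _, h => by
    have h' : IsWalk G H (s' :: L) (stepEnd G s) _ := h.2.2
    have ih := h'.tail_map_stepStart
    simp only [List.map_cons, List.tail_cons] at ih ⊢
    rw [List.dropLast_cons_cons, ← ih, h'.2.1]

lemma IsWalk.exists_avoiding_start {v₀ u : V} (hu : u ≠ v₀) {L : List (E × Bool)}
    (hL : IsWalk G H L v₀ u) :
    ∃ L', IsWalk G H L' v₀ u ∧ ∀ x ∈ L'.map (stepEnd G), x ≠ v₀ := by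
  by_cases h : ∀ x ∈ L.map (stepEnd G), x ≠ v₀
  · exact ⟨L, hL, h⟩
  push Not at h
  obtain ⟨_, hx, rfl⟩ := h
  obtain ⟨s, hs, hsv⟩ := List.mem_map.1 hx
  obtain ⟨L₁, L₂, rfl⟩ := List.append_of_mem hs
  exact (hsv ▸ hL.of_append_cons).exists_avoiding_start hu
termination_by L.length
decreasing_by subst_vars; simp only [List.length_append, List.length_cons]; omega

end Walks

section Components

variable {V E Γ : Type} {G : GainedGraph V E Γ} {H : Subgraph G}

lemma Reachable.refl {u : V} (hu : u ∈ H.verts) : Reachable G H u u := ⟨[], rfl, hu⟩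

lemma Reachable.symm {u w : V} (h : Reachable G H u w) : Reachable G H w u :=
  let ⟨_, hL⟩ := h; ⟨_, hL.revWalk⟩

lemma Reachable.trans {u x w : V} (h₁ : Reachable G H u x) (h₂ : Reachable G H x w) :
    Reachable G H u w :=
  let ⟨_, hL₁⟩ := h₁; let ⟨_, hL₂⟩ := h₂; ⟨_, hL₁.append hL₂⟩

variable [DecidableEq V] {F : Finset E}

lemma mem_edgeSpan_verts {x : V} :
    x ∈ (edgeSpan G F).verts ↔ ∃ f ∈ F, G.tail f = x ∨ G.head f = x := by
  simp only [edgeSpan, Finset.mem_union, Finset.mem_image]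
  grind

lemma edgeSpan_le {K : Subgraph G} (hFK : F ⊆ K.edges) : edgeSpan G F ≤ K := by
  refine ⟨fun x hx => ?_, hFK⟩
  obtain ⟨f, hf, rfl | rfl⟩ := mem_edgeSpan_verts.1 hx
  exacts [K.tail_mem f (hFK hf), K.head_mem f (hFK hf)]

lemma reachable_tail_of_mem {f : E} (hf : f ∈ F) {x : V} (hx : G.tail f = x ∨ G.head f = x) :
    Reachable G (edgeSpan G F) (G.tail f) x := by
  rcases hx with rfl | rfl
  · exact .refl (mem_edgeSpan_verts.2 ⟨f, hf, .inl rfl⟩)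
  · exact ⟨[(f, true)], hf, rfl, rfl, mem_edgeSpan_verts.2 ⟨f, hf, .inr rfl⟩⟩

lemma mem_componentOf_verts {e : E} {x : V} :
    x ∈ (componentOf G F e).verts ↔
      x ∈ (edgeSpan G F).verts ∧ Reachable G (edgeSpan G F) (G.tail e) x := by
  simp only [componentOf, mem_edgeSpan_verts, Finset.mem_filter]
  constructor
  · rintro ⟨f, ⟨hf, hef⟩, hfx⟩
    exact ⟨⟨f, hf, hfx⟩, hef.trans (reachable_tail_of_mem hf hfx)⟩
  · rintro ⟨⟨f, hf, hfx⟩, hex⟩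
    exact ⟨f, ⟨hf, hex.trans (reachable_tail_of_mem hf hfx).symm⟩, hfx⟩

lemma IsWalk.componentOf {e : E} : ∀ {L : List (E × Bool)} {u w : V},
    IsWalk G (edgeSpan G F) L u w → Reachable G (edgeSpan G F) (G.tail e) u →
      IsWalk G (componentOf G F e) L u w
  | [], _, _, h, hu => ⟨h.1, mem_componentOf_verts.2 ⟨h.2, hu⟩⟩
  | (f, b) :: _, _, _, h, hu => by
    have hstart : Reachable G (edgeSpan G F) (G.tail f) (stepStart G (f, b)) :=
      reachable_tail_of_mem h.1 (by cases b <;> simp [stepStart])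
    have hend : Reachable G (edgeSpan G F) (G.tail f) (stepEnd G (f, b)) :=
      reachable_tail_of_mem h.1 (by cases b <;> simp [stepEnd])
    have hef : Reachable G (edgeSpan G F) (G.tail e) (G.tail f) :=
      hu.trans (h.2.1 ▸ hstart.symm)
    exact ⟨Finset.mem_filter.2 ⟨h.1, hef⟩, h.2.1, h.2.2.componentOf (hef.trans hend)⟩

lemma connected_componentOf {e : E} (he : e ∈ F) : Connected G (componentOf G F e) := by
  have he' : G.tail e ∈ (edgeSpan G F).verts := mem_edgeSpan_verts.2 ⟨e, he, .inl rfl⟩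
  refine ⟨⟨G.tail e, mem_componentOf_verts.2 ⟨he', .refl he'⟩⟩, fun u hu w hw => ?_⟩
  obtain ⟨-, hu⟩ := mem_componentOf_verts.1 hu
  obtain ⟨-, hw⟩ := mem_componentOf_verts.1 hw
  obtain ⟨L, hL⟩ := hu.symm.trans hw
  exact ⟨L, hL.componentOf hu⟩

lemma componentOf_le {e : E} : componentOf G F e ≤ edgeSpan G F :=
  edgeSpan_le (Finset.filter_subset _ _)

lemma componentOf_le_of_subset {K : Subgraph G} (hFK : F ⊆ K.edges) {e : E} :
    componentOf G F e ≤ K :=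
  ⟨fun _ hx => (edgeSpan_le hFK).1 (componentOf_le.1 hx), fun _ hf => hFK (componentOf_le.2 hf)⟩

lemma disjoint_verts_componentOf {e e' : E}
    (h : componentOf G F e ≠ componentOf G F e') :
    Disjoint (componentOf G F e).verts (componentOf G F e').verts := by
  refine Finset.disjoint_left.2 fun x hx hx' => h ?_
  have hee' := (mem_componentOf_verts.1 hx).2.trans (mem_componentOf_verts.1 hx').2.symm
  simp only [componentOf]
  congr 1
  ext f
  simp only [Finset.mem_filter, and_congr_right_iff]
  exact fun _ => ⟨hee'.symm.trans, hee'.trans⟩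

lemma biUnion_freeVerts_components :
    (components G F).biUnion Subgraph.freeVerts = (edgeSpan G F).freeVerts := by
  ext x
  simp only [components, Finset.image_biUnion, Finset.mem_biUnion, Subgraph.freeVerts,
    Finset.mem_sdiff]
  constructor
  · rintro ⟨e, -, hx, hxfree⟩
    exact ⟨componentOf_le.1 hx, hxfree⟩
  · rintro ⟨hx, hxfree⟩
    obtain ⟨f, hf, hfx⟩ := mem_edgeSpan_verts.1 hx
    exact ⟨f, hf, mem_componentOf_verts.2 ⟨hx, reachable_tail_of_mem hf hfx⟩, hxfree⟩

lemma sum_card_freeVerts_components :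
    ∑ X ∈ components G F, X.freeVerts.card = (edgeSpan G F).freeVerts.card := by
  rw [← biUnion_freeVerts_components, Finset.card_biUnion]
  intro X hX Y hY h
  obtain ⟨e, -, rfl⟩ := Finset.mem_image.1 hX
  obtain ⟨e', -, rfl⟩ := Finset.mem_image.1 hY
  exact (disjoint_verts_componentOf h).mono Finset.sdiff_subset Finset.sdiff_subset

end Components

section GainGroup

variable {V E Γ : Type} {G : GainedGraph V E Γ} {H K X : Subgraph G}

lemma gainGroup_mono [Group Γ] (hHK : H ≤ K) : gainGroup G H ≤ gainGroup G K :=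
  Subgroup.closure_mono fun _ ⟨u, L, hL, hfree, hg⟩ => ⟨u, L, hL.mono hHK, hfree, hg⟩

lemma Balanced.of_le [Group Γ] (hK : Balanced G K) (hHK : H ≤ K) : Balanced G H :=
  le_bot_iff.1 (hK ▸ gainGroup_mono hHK)

/-- Conjugating a closed walk by a path from `u` does not change its gain, `Γ` being abelian. -/
lemma exists_walk_of_mem_gainGroup [CommGroup Γ] (hX : Connected G X) {u : V}
    (hu : u ∈ X.verts) {g : Γ} (hg : g ∈ gainGroup G X) :
    ∃ L, IsWalk G X L u u ∧ walkGain G L = g := by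
  let W : Subgroup Γ :=
    { carrier := {g | ∃ L, IsWalk G X L u u ∧ walkGain G L = g}
      one_mem' := ⟨[], ⟨rfl, hu⟩, rfl⟩
      mul_mem' := by
        rintro _ _ ⟨L₁, h₁, rfl⟩ ⟨L₂, h₂, rfl⟩
        exact ⟨L₁ ++ L₂, h₁.append h₂, walkGain_append L₁ L₂⟩
      inv_mem' := by
        rintro _ ⟨L, h, rfl⟩
        exact ⟨revWalk L, h.revWalk, walkGain_revWalk L⟩ }
  refine (Subgroup.closure_le W).2 ?_ hg
  rintro _ ⟨u', L, hL, -, rfl⟩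
  obtain ⟨P, hP⟩ := hX.2 u hu u' hL.start_mem
  refine ⟨P ++ (L ++ revWalk P), hP.append (hL.append hP.revWalk), ?_⟩
  rw [walkGain_append, walkGain_append, walkGain_revWalk, mul_inv_cancel_comm_assoc]

/-- Join `X` to the base vertex `v₀` by a path `P` meeting `v₀` only at its start; then
`P ++ L ++ P⁻¹` is a closed walk at `v₀` with no internal visit to `v₀`, for every closed walk
`L` in `X`. -/
lemma NearBalancedAt.gainGroup_subset [CommGroup Γ] {v₀ : V} {δ : Γ}
    (hK : NearBalancedAt G K v₀ δ) (hKconn : Connected G K) (hv₀ : v₀ ∈ K.verts)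
    (hXK : X ≤ K) (hX : Connected G X) (hv₀X : v₀ ∉ X.verts) :
    (gainGroup G X : Set Γ) ⊆ {1, δ, δ⁻¹} := by
  intro g hg
  obtain ⟨u, hu⟩ := hX.1
  obtain ⟨L, hL, rfl⟩ := exists_walk_of_mem_gainGroup hX hu hg
  have hu₀ : u ≠ v₀ := fun h => hv₀X (h ▸ hu)
  obtain ⟨P₀, hP₀⟩ := hKconn.2 v₀ hv₀ u (hXK.1 hu)
  obtain ⟨P, hP, hPv₀⟩ := hP₀.exists_avoiding_start hu₀
  have hPne : (revWalk P).map (stepEnd G) ≠ [] := by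
    rintro h
    rw [List.map_eq_nil_iff, revWalk, List.reverse_eq_nil_iff, List.map_eq_nil_iff] at h
    exact hu₀ (h ▸ hP).1.symm
  have hinner : ∀ x ∈ ((P ++ (L ++ revWalk P)).map (stepEnd G)).dropLast, x ≠ v₀ := by
    intro x hx
    rw [List.map_append, List.map_append, List.dropLast_append_of_ne_nil
      (List.append_ne_nil_of_right_ne_nil _ hPne), List.dropLast_append_of_ne_nil hPne,
      map_stepEnd_revWalk, List.dropLast_reverse, hP.tail_map_stepStart] at hx
    rcases List.mem_append.1 hx with hx | hx
    · exact hPv₀ x hx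
    rcases List.mem_append.1 hx with hx | hx
    · exact fun h => hv₀X (h ▸ hL.mem_of_mem_map_stepEnd x hx)
    · exact hPv₀ x (List.dropLast_subset _ (List.mem_reverse.1 hx))
  have := hK.2 _ (hP.append ((hL.mono hXK).append hP.revWalk)) hinner
  rwa [walkGain_append, walkGain_append, walkGain_revWalk, mul_inv_cancel_comm_assoc] at this

lemma NearBalancedAt.natCard_gainGroup_le_three [CommGroup Γ] {v₀ : V} {δ : Γ}
    (hK : NearBalancedAt G K v₀ δ) (hKconn : Connected G K) (hv₀ : v₀ ∈ K.verts)
    (hXK : X ≤ K) (hX : Connected G X) (hv₀X : v₀ ∉ X.verts) :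
    Nat.card (gainGroup G X) ≤ 3 := by
  rw [← SetLike.coe_sort_coe, Nat.card_coe_set_eq]
  calc (gainGroup G X : Set Γ).ncard
      ≤ ({1, δ, δ⁻¹} : Set Γ).ncard :=
        Set.ncard_le_ncard (hK.gainGroup_subset hKconn hv₀ hXK hX hv₀X) (Set.toFinite _)
    _ ≤ ({δ⁻¹} : Set Γ).ncard + 1 + 1 :=
        (Set.ncard_insert_le _ _).trans (by grw [Set.ncard_insert_le δ {δ⁻¹}])
    _ = 3 := by rw [Set.ncard_singleton]

end GainGroup

section Alpha

variable {V E Γ : Type} [DecidableEq V] [Group Γ] {G : GainedGraph V E Γ} {k j : ℕ}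
  {X : Subgraph G}

lemma alpha_of_balanced (h : Balanced G X) : alpha G k j X = 0 := if_pos h

lemma alpha_of_odd_isZIso_two (h : ¬ Balanced G X) (h₂ : Odd j ∧ IsZIso G X 2) :
    alpha G k j X = 1 := by
  rw [alpha, if_neg h, if_pos h₂]

lemma alpha_nonneg (hc : X.fixedVerts.card ≤ 1) : 0 ≤ alpha G k j X := by
  unfold alpha; split_ifs <;> omega

lemma alpha_le (hc : X.fixedVerts.card ≤ 1) :
    alpha G k j X ≤ 3 - 2 * (X.fixedVerts.card : ℤ) := by
  unfold alpha; split_ifs <;> omega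

lemma alpha_le_two
    (h : Balanced G X ∨ (Odd j ∧ IsZIso G X 2) ∨ IsSpm G k j X ∨ IsS G k j 0 X ∨
      (X.fixedVerts.card = 0 ∧ ProperNearBalanced G X)) :
    alpha G k j X ≤ 2 := by
  unfold alpha; split_ifs <;> first | omega | tauto

end Alpha

lemma natCast_eq_intCast_of_dvd {j m n : ℕ} {i : ℤ} (h : (j : ZMod n) = i) (hmn : m ∣ n) :
    (j : ZMod m) = i := by
  simpa using congrArg (ZMod.castHom hmn (ZMod m)) h

lemma sset_of_dvd {k j m n : ℕ} {i : ℤ} (hn : n ∈ SSet k j i) (hmn : m ∣ n) (hm : 2 ≤ m)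
    (hodd : Odd j → m ≠ 2) : m ∈ SSet k j i :=
  ⟨hm, hmn.trans hn.2.1, hodd, natCast_eq_intCast_of_dvd hn.2.2.2 hmn⟩

lemma notMem_sset_of_mem_sset_zero {k j n : ℕ} {i : ℤ} (hi : i = -1 ∨ i = 1)
    (h₀ : n ∈ SSet k j 0) : n ∉ SSet k j i := by
  rintro ⟨hn, -, -, hj⟩
  have : Fact (1 < n) := ⟨hn⟩
  rw [h₀.2.2.2] at hj
  rcases hi with rfl | rfl <;> simp at hj

section Cyclic

variable {V E : Type} {k j : ℕ} {G : GainedGraph V E (Multiplicative (ZMod k))}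
  {X : Subgraph G}

lemma isZIso_iff {n : ℕ} : IsZIso G X n ↔ Nat.card (gainGroup G X) = n := by
  constructor
  · rintro ⟨e⟩
    rw [Nat.card_congr e.toEquiv, Nat.card_congr Multiplicative.toAdd, Nat.card_zmod]
  · rintro rfl
    exact ⟨(zmodCyclicMulEquiv inferInstance).symm⟩

lemma isS_iff {i : ℤ} : IsS G k j i X ↔ Nat.card (gainGroup G X) ∈ SSet k j i := by
  simp [IsS, isZIso_iff]

lemma natCard_gainGroup_dvd (X : Subgraph G) : Nat.card (gainGroup G X) ∣ k := by
  simpa [Nat.card_congr Multiplicative.toAdd] using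
    Subgroup.card_subgroup_dvd_card (gainGroup G X)

lemma two_le_natCard_gainGroup [NeZero k] (h : ¬ Balanced G X) :
    2 ≤ Nat.card (gainGroup G X) := by
  have h₁ : Nat.card (gainGroup G X) ≠ 1 := fun h₁ => h (Subgroup.card_eq_one.1 h₁)
  have h₀ : 0 < Nat.card (gainGroup G X) := Nat.card_pos
  omega

variable [DecidableEq V]

lemma alpha_of_isSpm (h : ¬ Balanced G X) (hX : IsSpm G k j X) :
    alpha G k j X = 2 - (X.fixedVerts.card : ℤ) := by
  have h₂ : ¬ (Odd j ∧ IsZIso G X 2) := by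
    rintro ⟨hodd, hX₂⟩
    rw [isZIso_iff] at hX₂
    rcases hX with hX | hX <;> exact (isS_iff.1 hX).2.2.1 hodd hX₂
  rw [alpha, if_neg h, if_neg h₂, if_pos hX]

lemma alpha_of_isS_zero (h : ¬ Balanced G X) (hX : IsS G k j 0 X) :
    alpha G k j X = 2 - 2 * (X.fixedVerts.card : ℤ) := by
  rw [isS_iff] at hX
  have h₂ : ¬ (Odd j ∧ IsZIso G X 2) := fun ⟨hodd, hX₂⟩ => hX.2.2.1 hodd (isZIso_iff.1 hX₂)
  have h₃ : ¬ IsSpm G k j X := by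
    rintro (h₃ | h₃) <;> rw [isS_iff] at h₃
    exacts [notMem_sset_of_mem_sset_zero (.inl rfl) hX h₃,
      notMem_sset_of_mem_sset_zero (.inr rfl) hX h₃]
  rw [alpha, if_neg h, if_neg h₂, if_neg h₃, if_pos (.inl (isS_iff.2 hX))]

lemma alpha_le_two_of_natCard_le_three [NeZero k] (h : ¬ Balanced G X)
    (h₃ : Nat.card (gainGroup G X) ≤ 3) : alpha G k j X ≤ 2 := by
  have h₂ := two_le_natCard_gainGroup h
  have hk := natCard_gainGroup_dvd X
  apply alpha_le_two
  interval_cases hm : Nat.card (gainGroup G X)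
  · rcases Nat.even_or_odd j with hj | hj
    · refine .inr (.inr (.inr (.inl ?_)))
      rw [isS_iff, hm]
      refine ⟨le_rfl, hk, fun h => absurd hj (Nat.not_even_iff_odd.2 h), ?_⟩
      simpa [ZMod.natCast_eq_zero_iff, ← even_iff_two_dvd] using hj
    · exact .inr (.inl ⟨hj, isZIso_iff.2 hm⟩)
  · have hS : ∀ i : ℤ, (j : ZMod 3) = i → IsS G k j i X :=
      fun i hi => by rw [isS_iff, hm]; exact ⟨by norm_num, hk, by norm_num, hi⟩
    have : ∀ x : ZMod 3, x = ((0 : ℤ) : ZMod 3) ∨ x = ((-1 : ℤ) : ZMod 3) ∨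
        x = ((1 : ℤ) : ZMod 3) := by decide
    rcases this j with h0 | h1 | h1
    exacts [.inr (.inr (.inr (.inl (hS 0 h0)))), .inr (.inr (.inl (.inl (hS (-1) h1)))),
      .inr (.inr (.inl (.inr (hS 1 h1))))]

end Cyclic

section Monotone

variable {V E : Type} {k j : ℕ} [NeZero k] {G : GainedGraph V E (Multiplicative (ZMod k))}
  {X K : Subgraph G}

lemma IsS.of_le {i : ℤ} (hK : IsS G k j i K) (hXK : X ≤ K) (hX : ¬ Balanced G X) :
    (Odd j ∧ IsZIso G X 2) ∨ IsS G k j i X := by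
  rw [isS_iff] at hK ⊢
  by_cases h₂ : Odd j ∧ Nat.card (gainGroup G X) = 2
  · exact .inl ⟨h₂.1, isZIso_iff.2 h₂.2⟩
  · exact .inr (sset_of_dvd hK (Subgroup.card_dvd_of_le (gainGroup_mono hXK))
      (two_le_natCard_gainGroup hX) fun hodd => (h₂ ⟨hodd, ·⟩))

lemma IsS.zero_of_le (hK : IsS G k j 0 K) (hXK : X ≤ K) (hX : ¬ Balanced G X) :
    IsS G k j 0 X := by
  refine (hK.of_le hXK hX).resolve_left fun ⟨hodd, hX₂⟩ => ?_
  have h₂ : 2 ∣ Nat.card (gainGroup G K) :=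
    isZIso_iff.1 hX₂ ▸ Subgroup.card_dvd_of_le (gainGroup_mono hXK)
  have hj := natCast_eq_intCast_of_dvd (isS_iff.1 hK).2.2.2 h₂
  rw [Int.cast_zero, ZMod.natCast_eq_zero_iff, ← even_iff_two_dvd] at hj
  exact Nat.not_odd_iff_even.2 hj hodd

lemma IsSpm.of_le (hK : IsSpm G k j K) (hXK : X ≤ K) (hX : ¬ Balanced G X) :
    (Odd j ∧ IsZIso G X 2) ∨ IsSpm G k j X := by
  rcases hK with hK | hK
  exacts [(hK.of_le hXK hX).imp_right .inl, (hK.of_le hXK hX).imp_right .inr]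

variable [DecidableEq V]

/-- If `X` avoids the base vertex its gains lie in `{1, δ, δ⁻¹}`, so `|⟨X⟩| ≤ 3`; otherwise `X`
is near-balanced at the same base vertex. -/
lemma ProperNearBalanced.alpha_le_two_of_le (hK : ProperNearBalanced G K)
    (hKconn : Connected G K) (hXK : X ≤ K) (hX : Connected G X) : alpha G k j X ≤ 2 := by
  by_cases hXbal : Balanced G X
  · rw [alpha_of_balanced hXbal]; omega
  obtain ⟨⟨hfree, v₀, hv₀, δ, hNB⟩, -, -⟩ := hK
  by_cases h₃ : Nat.card (gainGroup G X) ≤ 3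
  · exact alpha_le_two_of_natCard_le_three hXbal h₃
  have hv₀X : v₀ ∈ X.verts := by
    by_contra hv₀X
    exact h₃ (hNB.natCard_gainGroup_le_three hKconn hv₀ hXK hX hv₀X)
  have hnot : ∀ n ≤ 3, ¬ IsZIso G X n := fun n hn hXn => h₃ (isZIso_iff.1 hXn ▸ hn)
  refine alpha_le_two (.inr (.inr (.inr (.inr ⟨?_, ?_, hnot 2 (by omega), hnot 3 le_rfl⟩))))
  · exact Finset.card_eq_zero.2 (Finset.eq_empty_of_forall_notMem fun x hx =>
      hfree x (hXK.1 (Finset.mem_inter.1 hx).1) (Finset.mem_inter.1 hx).2)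
  · exact ⟨fun x hx => hfree x (hXK.1 hx), v₀, hv₀X, δ, hXbal,
      fun L hL => hNB.2 L (hL.mono hXK)⟩

lemma alpha_add_le_of_le (hXK : X ≤ K) (hX : Connected G X) (hK : Connected G K)
    (hcK : K.fixedVerts.card ≤ 1) :
    alpha G k j X + 2 * (X.fixedVerts.card : ℤ) ≤
      alpha G k j K + 2 * (K.fixedVerts.card : ℤ) := by
  have hc := Subgraph.card_fixedVerts_le_of_le hXK
  by_cases hXbal : Balanced G X
  · rw [alpha_of_balanced hXbal]
    have := alpha_nonneg (k := k) (j := j) hcK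
    omega
  have hKbal : ¬ Balanced G K := fun h => hXbal (h.of_le hXK)
  by_cases h₂ : Odd j ∧ IsZIso G K 2
  · have hX₂ : Odd j ∧ IsZIso G X 2 := by
      refine ⟨h₂.1, isZIso_iff.2 (le_antisymm ?_ (two_le_natCard_gainGroup hXbal))⟩
      exact Nat.le_of_dvd two_pos
        (isZIso_iff.1 h₂.2 ▸ Subgroup.card_dvd_of_le (gainGroup_mono hXK))
    rw [alpha_of_odd_isZIso_two hKbal h₂, alpha_of_odd_isZIso_two hXbal hX₂]
    omega
  by_cases h₃ : IsSpm G k j K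
  · rw [alpha_of_isSpm hKbal h₃]
    rcases h₃.of_le hXK hXbal with hX | hX
    · rw [alpha_of_odd_isZIso_two hXbal hX]; omega
    · rw [alpha_of_isSpm hXbal hX]; omega
  by_cases h₄ : IsS G k j 0 K
  · rw [alpha_of_isS_zero hKbal h₄, alpha_of_isS_zero hXbal (h₄.zero_of_le hXK hXbal)]
    omega
  by_cases h₅ : K.fixedVerts.card = 0 ∧ ProperNearBalanced G K
  · conv_rhs => rw [alpha, if_neg hKbal, if_neg h₂, if_neg h₃, if_pos (.inr h₅)]
    have := h₅.2.alpha_le_two_of_le (j := j) hK hXK hX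
    omega
  · conv_rhs => rw [alpha, if_neg hKbal, if_neg h₂, if_neg h₃, if_neg (not_or.2 ⟨h₄, h₅⟩)]
    have := alpha_le (k := k) (j := j) (hc.trans hcK)
    omega

end Monotone

section Count

variable {V E Γ : Type} [DecidableEq V] [Group Γ] {G : GainedGraph V E Γ} {k j : ℕ}
  {F : Finset E} {K : Subgraph G}

lemma fCount_eq (G : GainedGraph V E Γ) (k j : ℕ) (F : Finset E) :
    fCount G k j F = 2 * ((edgeSpan G F).freeVerts.card : ℤ) -
      ∑ X ∈ components G F, (3 - alpha G k j X - 2 * (X.fixedVerts.card : ℤ)) := by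
  rw [← sum_card_freeVerts_components, fCount, Nat.cast_sum, Finset.mul_sum,
    ← Finset.sum_sub_distrib]
  refine Finset.sum_congr rfl fun X _ => ?_
  have := X.card_freeVerts_add_card_fixedVerts
  omega

lemma sub_alpha_nonneg {X : Subgraph G} (hX : X.fixedVerts.card ≤ 1) :
    0 ≤ 3 - alpha G k j X - 2 * (X.fixedVerts.card : ℤ) := by
  have := alpha_le (k := k) (j := j) hX
  omega

lemma fCount_le (hFK : F ⊆ K.edges) (hK : K.fixedVerts.card ≤ 1) :
    fCount G k j F ≤ 2 * ((edgeSpan G F).freeVerts.card : ℤ) := by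
  rw [fCount_eq, sub_le_self_iff]
  refine Finset.sum_nonneg fun X hX => sub_alpha_nonneg ?_
  obtain ⟨e, -, rfl⟩ := Finset.mem_image.1 hX
  exact (Subgraph.card_fixedVerts_le_of_le (componentOf_le_of_subset hFK)).trans hK

end Count

lemma fCount_add_le {V E : Type} [DecidableEq V] {k j : ℕ} [NeZero k]
    {G : GainedGraph V E (Multiplicative (ZMod k))} {F : Finset E} {K : Subgraph G}
    (hF : F.Nonempty) (hFK : F ⊆ K.edges) (hK : Connected G K) (hcK : K.fixedVerts.card ≤ 1) :
    fCount G k j F + (3 - alpha G k j K - 2 * (K.fixedVerts.card : ℤ)) ≤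
      2 * ((edgeSpan G F).freeVerts.card : ℤ) := by
  have hcX : ∀ X ∈ components G F, X.fixedVerts.card ≤ 1 := by
    intro X hX
    obtain ⟨e, -, rfl⟩ := Finset.mem_image.1 hX
    exact (Subgraph.card_fixedVerts_le_of_le (componentOf_le_of_subset hFK)).trans hcK
  obtain ⟨e, he⟩ := hF
  have he' : componentOf G F e ∈ components G F := Finset.mem_image_of_mem _ he
  have hmono := alpha_add_le_of_le (j := j) (componentOf_le_of_subset hFK)
    (connected_componentOf he) hK hcK
  have hle :=
    Finset.single_le_sum (fun X hX => sub_alpha_nonneg (k := k) (j := j) (hcX X hX)) he'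
  rw [fCount_eq]
  linarith

section EdgesAt

variable {V E Γ : Type} {G : GainedGraph V E Γ} {K : Subgraph G} {v : V}

def edgesAt [DecidableEq V] (G : GainedGraph V E Γ) (K : Subgraph G) (v : V) : Finset E :=
  K.edges.filter fun e => G.tail e = v ∨ G.head e = v

lemma card_edgesAt [DecidableEq V] (hloop : ¬ HasLoopAt G K v) :
    (edgesAt G K v).card = degree G K v := by
  rw [edgesAt, Finset.filter_or, Finset.card_union_of_disjoint]
  · rfl
  · exact Finset.disjoint_filter.2 fun e he ht hh => hloop ⟨e, he, ht, hh⟩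

lemma disjoint_edges_edgesAt [DecidableEq V] {H : Subgraph G} (hv : v ∉ H.verts) :
    Disjoint H.edges (edgesAt G K v) :=
  Finset.disjoint_left.2 fun e he he' => by
    rcases (Finset.mem_filter.1 he').2 with h | h
    exacts [hv (h ▸ H.tail_mem e he), hv (h ▸ H.head_mem e he)]

lemma eq_stepStart_or_eq_stepEnd {s : E × Bool} {x : V} (h : G.tail s.1 = x ∨ G.head s.1 = x) :
    x = stepStart G s ∨ x = stepEnd G s := by
  rcases s with ⟨_, _ | _⟩ <;> simp only [stepStart, stepEnd] <;> tauto

lemma tail_ne_head_of_not_hasLoopAt (hloop : ¬ HasLoopAt G K v) {s : E × Bool}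
    (hs : s.1 ∈ K.edges) (hv : stepEnd G s = v ∨ stepStart G s = v) : G.tail s.1 ≠ G.head s.1 := by
  intro h
  rcases s with ⟨e, _ | _⟩ <;> simp only [stepStart, stepEnd] at hv <;>
    exact hloop ⟨e, hs, by rcases hv with hv | hv <;> simp_all⟩

lemma step_eq_of_stepEnd_eq {s t : E × Bool} (hs : G.tail s.1 ≠ G.head s.1) (h₁ : t.1 = s.1)
    (h₂ : stepEnd G t = stepEnd G s) : t = s := by
  rcases s with ⟨_, _ | _⟩ <;> rcases t with ⟨_, _ | _⟩ <;> simp_all [stepEnd]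

lemma step_eq_of_stepStart_eq {s t : E × Bool} (hs : G.tail s.1 ≠ G.head s.1)
    (h₁ : t.1 = s.1) (h₂ : stepStart G t = stepStart G s) : t = s := by
  rcases s with ⟨_, _ | _⟩ <;> rcases t with ⟨_, _ | _⟩ <;> simp_all [stepStart]

end EdgesAt

/-- The data of a 1-reduction at `v` adding `f`: the path `s₁ s₂` of length two through `v`
that `f` replaces. -/
structure IsReductionPath {V E Γ : Type} [Group Γ] (G : GainedGraph V E Γ) (K : Subgraph G)
    (v : V) (f : E) (s₁ s₂ : E × Bool) : Prop where
  mem₁ : s₁.1 ∈ K.edges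
  mem₂ : s₂.1 ∈ K.edges
  ne : s₁.1 ≠ s₂.1
  end₁ : stepEnd G s₁ = v
  start₂ : stepStart G s₂ = v
  tail_eq : G.tail f = stepStart G s₁
  head_eq : G.head f = stepEnd G s₂
  gain_eq : G.gain f = stepGain G s₁ * stepGain G s₂

lemma IsOneReduction.exists_isReductionPath {V E Γ : Type} [DecidableEq V] [DecidableEq E]
    [Group Γ] {G : GainedGraph V E Γ} {K : Subgraph G} {v : V} {f : E}
    (hf : IsOneReduction G K v f) : ∃ s₁ s₂, IsReductionPath G K v f s₁ s₂ :=
  let ⟨_, _, _, s₁, s₂, h₁, h₂, h₃, h₄, h₅, h₆, h₇, h₈⟩ := hf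
  ⟨s₁, s₂, h₁, h₂, h₃, h₄, h₅, h₆, h₇, h₈⟩

namespace IsReductionPath

variable {V E Γ : Type} [Group Γ] {G : GainedGraph V E Γ} {K : Subgraph G} {v : V} {f f' : E}
  {s₁ s₂ t₁ t₂ : E × Bool}

lemma mem_edgesAt [DecidableEq V] (p : IsReductionPath G K v f s₁ s₂) :
    s₁.1 ∈ edgesAt G K v ∧ s₂.1 ∈ edgesAt G K v := by
  refine ⟨Finset.mem_filter.2 ⟨p.mem₁, ?_⟩, Finset.mem_filter.2 ⟨p.mem₂, ?_⟩⟩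
  · rw [← p.end₁]; rcases s₁ with ⟨_, _ | _⟩ <;> simp [stepEnd]
  · rw [← p.start₂]; rcases s₂ with ⟨_, _ | _⟩ <;> simp [stepStart]

lemma endpoint_eq (p : IsReductionPath G K v f s₁ s₂) {a : E} (ha : a = s₁.1 ∨ a = s₂.1)
    {x : V} (hx : G.tail a = x ∨ G.head a = x) : x = v ∨ x = G.tail f ∨ x = G.head f := by
  rcases ha with rfl | rfl
  · rcases eq_stepStart_or_eq_stepEnd hx with h | h
    exacts [.inr (.inl (h.trans p.tail_eq.symm)), .inl (h.trans p.end₁)]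
  · rcases eq_stepStart_or_eq_stepEnd hx with h | h
    exacts [.inl (h.trans p.start₂), .inr (.inr (h.trans p.head_eq.symm))]

/-- Without loops at `v`, the orientation of each step is forced, so two reduction paths
through the same pair of edges add the same edge, up to reversal. -/
lemma sameEdge [DecidableEq E] (p : IsReductionPath G K v f s₁ s₂)
    (q : IsReductionPath G K v f' t₁ t₂) (hloop : ¬ HasLoopAt G K v)
    (h : ({s₁.1, s₂.1} : Finset E) = {t₁.1, t₂.1}) :
    SameEdge G f f' := by
  have hs₁ := tail_ne_head_of_not_hasLoopAt hloop p.mem₁ (.inl p.end₁)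
  have hs₂ := tail_ne_head_of_not_hasLoopAt hloop p.mem₂ (.inr p.start₂)
  rw [← Finset.coe_inj, Finset.coe_pair, Finset.coe_pair, Set.pair_eq_pair_iff] at h
  rcases h with ⟨h₁, h₂⟩ | ⟨h₁, h₂⟩
  · obtain rfl := step_eq_of_stepEnd_eq hs₁ h₁.symm (q.end₁.trans p.end₁.symm)
    obtain rfl := step_eq_of_stepStart_eq hs₂ h₂.symm (q.start₂.trans p.start₂.symm)
    exact .inl ⟨p.tail_eq.trans q.tail_eq.symm, p.head_eq.trans q.head_eq.symm,
      p.gain_eq.trans q.gain_eq.symm⟩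
  · obtain rfl := step_eq_of_stepEnd_eq (s := flipStep s₂) hs₂ h₂.symm
      (q.end₁.trans (p.start₂.symm.trans (stepEnd_flipStep s₂).symm))
    obtain rfl := step_eq_of_stepStart_eq (s := flipStep s₁) hs₁ h₁.symm
      (q.start₂.trans (p.end₁.symm.trans (stepStart_flipStep s₁).symm))
    refine .inr ⟨?_, ?_, ?_⟩
    · rw [p.tail_eq, q.head_eq, stepEnd_flipStep]
    · rw [p.head_eq, q.tail_eq, stepStart_flipStep]
    · rw [p.gain_eq, q.gain_eq, stepGain_flipStep, stepGain_flipStep, mul_inv_rev, inv_inv,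
        inv_inv]

/-- Two different 1-reductions at a vertex of degree three use, between them, all three
edges at it. -/
lemma endpoint_eq_of_mem_edgesAt [DecidableEq V] [DecidableEq E]
    (p : IsReductionPath G K v f s₁ s₂) (q : IsReductionPath G K v f' t₁ t₂)
    (hdeg : degree G K v = 3) (hloop : ¬ HasLoopAt G K v) (hdiff : ¬ SameEdge G f f')
    {a : E} (ha : a ∈ edgesAt G K v) {x : V}
    (hx : G.tail a = x ∨ G.head a = x) :
    x = v ∨ x = G.tail f ∨ x = G.head f ∨ x = G.tail f' ∨ x = G.head f' := by
  have hcover := Finset.subset_union_of_card_add_one_eq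
    (Finset.insert_subset p.mem_edgesAt.1 (Finset.singleton_subset_iff.2 p.mem_edgesAt.2))
    (Finset.insert_subset q.mem_edgesAt.1 (Finset.singleton_subset_iff.2 q.mem_edgesAt.2))
    (by rw [Finset.card_pair p.ne, card_edgesAt hloop, hdeg])
    (by rw [Finset.card_pair p.ne, Finset.card_pair q.ne]) (mt (p.sameEdge q hloop) hdiff) ha
  simp only [Finset.mem_union, Finset.mem_insert, Finset.mem_singleton] at hcover
  rcases hcover with ha | ha
  · rcases p.endpoint_eq ha hx with h | h | h <;> simp [h]
  · rcases q.endpoint_eq ha hx with h | h | h <;> simp [h]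

lemma verts_edgeSpan_subset [DecidableEq V] [DecidableEq E] {H : Subgraph G}
    (p : IsReductionPath G K v f s₁ s₂) (q : IsReductionPath G K v f' t₁ t₂)
    (hdeg : degree G K v = 3) (hloop : ¬ HasLoopAt G K v) (hdiff : ¬ SameEdge G f f')
    (hf : G.tail f ∈ H.verts ∧ G.head f ∈ H.verts)
    (hf' : G.tail f' ∈ H.verts ∧ G.head f' ∈ H.verts) :
    (edgeSpan G (H.edges ∪ edgesAt G K v)).verts ⊆ insert v H.verts := by
  intro x hx
  obtain ⟨a, ha, hax⟩ := mem_edgeSpan_verts.1 hx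
  rcases Finset.mem_union.1 ha with ha | ha
  · refine Finset.mem_insert_of_mem ?_
    rcases hax with rfl | rfl
    exacts [H.tail_mem a ha, H.head_mem a ha]
  · rcases p.endpoint_eq_of_mem_edgesAt q hdeg hloop hdiff ha hax with rfl | rfl | rfl | rfl | rfl
    exacts [Finset.mem_insert_self _ _, Finset.mem_insert_of_mem hf.1,
      Finset.mem_insert_of_mem hf.2, Finset.mem_insert_of_mem hf'.1,
      Finset.mem_insert_of_mem hf'.2]

end IsReductionPath

section Blocker

variable {V E : Type} [DecidableEq V] [DecidableEq E] {k j : ℕ}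
  {G : GainedGraph V E (Multiplicative (ZMod k))} {G₀ H₁ H₂ : Subgraph G} {v : V} {f₁ f₂ : E}

lemma alpha_addEdge_ne_of_inter_nonempty [NeZero k] (hG₀ : IsGainGraphOn G G₀)
    (htight : GainTightKJ G k j G₀) (hdeg : degree G G₀ v = 3) (hloop : ¬ HasLoopAt G G₀ v)
    (hf₁ : IsOneReduction G G₀ v f₁) (hf₂ : IsOneReduction G G₀ v f₂)
    (hdiff : ¬ SameEdge G f₁ f₂) (hb₁ : IsBlocker G k j G₀ v f₁ H₁)
    (hb₂ : IsBlocker G k j G₀ v f₂ H₂) (hE : (H₁.inter H₂).edges.Nonempty) :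
    alpha G k j (H₁.addEdge f₁) ≠ 3 - 2 * (H₁.fixedVerts.card : ℤ) := by
  intro hα₁
  obtain ⟨hH₁, hv₁, ht₁, hh₁, -, -, hcount₁⟩ := hb₁
  obtain ⟨hH₂, hv₂, ht₂, hh₂, -, hconn₂, hcount₂⟩ := hb₂
  obtain ⟨s₁, s₂, p⟩ := hf₁.exists_isReductionPath
  obtain ⟨t₁, t₂, q⟩ := hf₂.exists_isReductionPath
  set U := H₁.union H₂
  set I := H₁.inter H₂
  set F := U.edges ∪ edgesAt G G₀ v
  have hFG₀ : F ⊆ G₀.edges := Finset.union_subset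
    (Finset.union_subset hH₁.2 hH₂.2) (Finset.filter_subset _ _)
  have hF : (F.card : ℤ) ≤ 2 * (edgeSpan G F).freeVerts.card :=
    (htight.1 _ (edgeSpan_le hFG₀) ⟨s₁.1, Finset.mem_union_right _ p.mem_edgesAt.1⟩).trans
      (fCount_le hFG₀ hG₀.fixed_card)
  have hK₂ : (H₂.addEdge f₂).fixedVerts = H₂.fixedVerts := by
    simp only [Subgraph.fixedVerts, Subgraph.addEdge_verts_of_mem ht₂ hh₂]
  have hI : (I.edges.card : ℤ) + (3 - alpha G k j (H₂.addEdge f₂) - 2 * H₂.fixedVerts.card) ≤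
      2 * (edgeSpan G I.edges).freeVerts.card := by
    have hIG₀ : I ≤ G₀ := ⟨fun x hx => hH₁.1 (Finset.mem_inter.1 hx).1,
      fun e he => hH₁.2 (Finset.mem_inter.1 he).1⟩
    have := fCount_add_le (j := j) hE
      (fun e he => Finset.mem_insert_of_mem (Finset.mem_inter.1 he).2) hconn₂
      (hK₂ ▸ (Subgraph.card_fixedVerts_le_of_le hH₂).trans hG₀.fixed_card)
    rw [hK₂] at this
    linarith [htight.1 I hIG₀ hE]
  have hcard : F.card + I.edges.card = H₁.edges.card + H₂.edges.card + 3 := by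
    have hvU : v ∉ U.verts := by simp [U, Subgraph.union, hv₁, hv₂]
    rw [Finset.card_union_of_disjoint (disjoint_edges_edgesAt hvU), card_edgesAt hloop, hdeg,
      add_right_comm]
    exact congrArg (· + 3) (Finset.card_union_add_card_inter _ _)
  have hφF : (edgeSpan G F).freeVerts.card ≤ U.freeVerts.card + 1 :=
    Subgraph.card_freeVerts_le_of_subset_insert (p.verts_edgeSpan_subset q hdeg hloop hdiff
      ⟨Finset.mem_union_left _ ht₁, Finset.mem_union_left _ hh₁⟩
      ⟨Finset.mem_union_right _ ht₂, Finset.mem_union_right _ hh₂⟩)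
  have hφI : (edgeSpan G I.edges).freeVerts.card ≤ I.freeVerts.card :=
    Subgraph.card_freeVerts_le_of_le (edgeSpan_le subset_rfl)
  have hUI : U.freeVerts.card + I.freeVerts.card = H₁.freeVerts.card + H₂.freeVerts.card :=
    Subgraph.card_freeVerts_union_add_inter H₁ H₂
  have h₁ := H₁.card_freeVerts_add_card_fixedVerts
  have h₂ := H₂.card_freeVerts_add_card_fixedVerts
  omega

end Blocker

lemma SameEdge.symm {V E Γ : Type} [Group Γ] {G : GainedGraph V E Γ} {f g : E}
    (h : SameEdge G f g) : SameEdge G g f := by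
  rcases h with ⟨h₁, h₂, h₃⟩ | ⟨h₁, h₂, h₃⟩
  · exact .inl ⟨h₁.symm, h₂.symm, h₃.symm⟩
  · exact .inr ⟨h₂.symm, h₁.symm, by rw [h₃, inv_inv]⟩

theorem no_general_count_blocker_general
    {V E : Type} [DecidableEq V] [DecidableEq E]
    (k j : ℕ) (hk : 4 ≤ k)
    (G : GainedGraph V E (Multiplicative (ZMod k)))
    (G₀ : Subgraph G) (hG₀ : IsGainGraphOn G G₀)
    (htight : GainTightKJ G k j G₀)
    (v : V)
    (hdeg : degree G G₀ v = 3) (hloop : ¬ HasLoopAt G G₀ v)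
    (f₁ f₂ : E) (hf₁ : IsOneReduction G G₀ v f₁) (hf₂ : IsOneReduction G G₀ v f₂)
    (hdiff : ¬ SameEdge G f₁ f₂)
    (H₁ H₂ : Subgraph G)
    (hb₁ : IsBlocker G k j G₀ v f₁ H₁) (hb₂ : IsBlocker G k j G₀ v f₂ H₂)
    (hE : ((H₁.inter H₂).edges).Nonempty) :
    alpha G k j (H₁.addEdge f₁) ≠ 3 - 2 * (H₁.fixedVerts.card : ℤ) ∧
      alpha G k j (H₂.addEdge f₂) ≠ 3 - 2 * (H₂.fixedVerts.card : ℤ) := by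
  have : NeZero k := ⟨by omega⟩
  have hE' : (H₂.inter H₁).edges.Nonempty := by
    change (H₂.edges ∩ H₁.edges).Nonempty
    rwa [Finset.inter_comm]
  exact ⟨alpha_addEdge_ne_of_inter_nonempty hG₀ htight hdeg hloop hf₁ hf₂ hdiff hb₁ hb₂ hE,
    alpha_addEdge_ne_of_inter_nonempty hG₀ htight hdeg hloop hf₂ hf₁ (mt SameEdge.symm hdiff)
      hb₂ hb₁ hE'⟩

/-- If the blockers `H₁, H₂` of two different 1-reductions at `v`
(adding `f₁` and `f₂`) satisfy `E(H₁ ∩ H₂) ≠ ∅`, then neither `H₁` nor `H₂` is a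
general-count blocker, i.e. `α_k^j(H_i + f_i) ≠ 3 − 2|V₀(H_i)|`. -/
theorem no_general_count_blocker
    {V E : Type} [DecidableEq V] [DecidableEq E] [Fintype V] [Fintype E]
    (k j : ℕ) (hk : 4 ≤ k) (hj2 : 2 ≤ j) (hjk : j ≤ k - 2)
    (G : GainedGraph V E (Multiplicative (ZMod k)))
    (G₀ : Subgraph G) (hG₀ : IsGainGraphOn G G₀)
    (htight : GainTightKJ G k j G₀)
    (v : V) (hv : v ∈ G₀.verts) (hvfree : v ∉ G.fixed)
    (hdeg : degree G G₀ v = 3) (hloop : ¬ HasLoopAt G G₀ v)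
    (f₁ f₂ : E) (hf₁ : IsOneReduction G G₀ v f₁) (hf₂ : IsOneReduction G G₀ v f₂)
    (hw₁ : IsGainGraphOn G (reduceAt G G₀ v f₁))
    (hw₂ : IsGainGraphOn G (reduceAt G G₀ v f₂))
    (hdiff : ¬ SameEdge G f₁ f₂)
    (H₁ H₂ : Subgraph G)
    (hb₁ : IsBlocker G k j G₀ v f₁ H₁) (hb₂ : IsBlocker G k j G₀ v f₂ H₂)
    (hE : ((H₁.inter H₂).edges).Nonempty) :
    alpha G k j (H₁.addEdge f₁) ≠ 3 - 2 * (H₁.fixedVerts.card : ℤ) ∧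
      alpha G k j (H₂.addEdge f₂) ≠ 3 - 2 * (H₂.fixedVerts.card : ℤ) :=
  no_general_count_blocker_general k j hk G G₀ hG₀ htight v hdeg hloop f₁ f₂ hf₁ hf₂ hdiff H₁ H₂ hb₁
    hb₂ hE

end GR
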